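/- Let d ≥ 1, let p : Fin d → ℝ be a probability vector and E : Fin d → ℝ, and set ρ = diag(p), H = diag(E) as d×d matrices. Then there exists a unitary d×d matrix U with tr(U ρ U† H) < tr(ρ H) if and only if there exist indices i, j with p_i > p_j and E_i > E_j. -/
import Mathlib

open Finset Matrix

lemma trace_formula {d : ℕ} (p E : Fin d → ℝ) (U : Matrix (Fin d) (Fin d) ℂ) :
    (Matrix.trace (U * Matrix.diagonal (fun i => (p i : ℂ)) * star U *
      Matrix.diagonal (fun i => (E i : ℂ)))).re =
    ∑ k, ∑ l, Complex.normSq (U k l) * (p l * E k) := by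
  have h : Matrix.trace (U * Matrix.diagonal (fun i => (p i : ℂ)) * star U *
      Matrix.diagonal (fun i => (E i : ℂ))) =
      ((∑ k, ∑ l, Complex.normSq (U k l) * (p l * E k) : ℝ) : ℂ) := by
    simp only [Matrix.trace, Matrix.diag, Matrix.mul_apply, Matrix.diagonal_apply,
      Finset.sum_mul, Finset.mul_sum, Matrix.star_apply, Matrix.conjTranspose_apply,
      mul_ite, ite_mul, mul_zero, zero_mul, Finset.sum_ite_eq, Finset.sum_ite_eq',
      Finset.mem_univ, if_true]
    push_cast
    refine Finset.sum_congr rfl fun k _ => Finset.sum_congr rfl fun l _ => ?_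
    rw [← Complex.mul_conj (U k l), Complex.star_def]
    ring
  rw [h, Complex.ofReal_re]

lemma perm_unitary {d : ℕ} (σ : Equiv.Perm (Fin d)) :
    σ.permMatrix ℂ ∈ Matrix.unitaryGroup (Fin d) ℂ := by
  rw [Matrix.mem_unitaryGroup_iff]
  ext k m
  simp only [Matrix.mul_apply, Matrix.star_apply, Matrix.conjTranspose_apply,
    Equiv.Perm.permMatrix, PEquiv.toMatrix_apply, Equiv.toPEquiv_apply,
    Option.mem_def, Option.some.injEq, Matrix.one_apply]
  simp [apply_ite, ite_mul, Finset.sum_ite_eq, eq_comm (a := k)]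

lemma key_ineq {d : ℕ} (p E : Fin d → ℝ) (hA : Antivary p E)
    (B : Matrix (Fin d) (Fin d) ℝ) (hB : B ∈ doublyStochastic ℝ (Fin d)) :
    ∑ i, p i * E i ≤ ∑ k, ∑ l, B k l * (p l * E k) := by
  have hB' : B ∈ (doublyStochastic ℝ (Fin d) : Set (Matrix (Fin d) (Fin d) ℝ)) := hB
  rw [doublyStochastic_eq_convexHull_permMatrix] at hB'
  have hlin : IsLinearMap ℝ (fun M : Matrix (Fin d) (Fin d) ℝ =>
      ∑ k, ∑ l, M k l * (p l * E k)) := by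
    constructor
    · intro M N
      simp [Matrix.add_apply, add_mul, Finset.sum_add_distrib]
    · intro c M
      simp [Matrix.smul_apply, smul_eq_mul, mul_assoc, Finset.mul_sum]
  have hconv : Convex ℝ {M : Matrix (Fin d) (Fin d) ℝ |
      ∑ i, p i * E i ≤ ∑ k, ∑ l, M k l * (p l * E k)} :=
    convex_halfSpace_ge hlin _
  refine convexHull_min ?_ hconv hB'
  rintro M ⟨σ, rfl⟩
  have hperm : ∑ k, ∑ l, (σ.permMatrix ℝ) k l * (p l * E k) = ∑ k, p (σ k) * E k := by
    refine Finset.sum_congr rfl fun k _ => ?_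
    simp [Equiv.Perm.permMatrix, PEquiv.toMatrix_apply, Equiv.toPEquiv_apply,
      ite_mul, Finset.sum_ite_eq, Finset.sum_ite_eq']
  have h2 := hA.sum_smul_le_sum_comp_perm_smul (σ := σ)
  rw [Set.mem_setOf_eq, hperm]
  simpa [smul_eq_mul] using h2


/-- For a state `ρ = diag p` diagonal in the eigenbasis of `H = diag E`, a
unitary strictly decreasing the average energy exists if and only if some
basis state is simultaneously strictly more likely and strictly more energetic
than another. -/
theorem stmt_4 (d : ℕ) (hd : 1 ≤ d) (p E : Fin d → ℝ)
    (hp_nonneg : ∀ j, 0 ≤ p j) (hp_sum : ∑ j, p j = 1) :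
    (∃ U ∈ Matrix.unitaryGroup (Fin d) ℂ,
        (Matrix.trace (U * Matrix.diagonal (fun i => (p i : ℂ)) * star U *
          Matrix.diagonal (fun i => (E i : ℂ)))).re <
        (Matrix.trace (Matrix.diagonal (fun i => (p i : ℂ)) *
          Matrix.diagonal (fun i => (E i : ℂ)))).re) ↔
      ∃ i j : Fin d, p j < p i ∧ E j < E i := by
  have htr2 : (Matrix.trace (Matrix.diagonal (fun i => (p i : ℂ)) *
      Matrix.diagonal (fun i => (E i : ℂ)))).re = ∑ i, p i * E i := by
    simp [Matrix.diagonal_mul_diagonal, Matrix.trace_diagonal, Complex.re_sum]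
  constructor
  · rintro ⟨U, hU, hlt⟩
    by_contra hno
    push_neg at hno
    have hA : Antivary p E := fun i j hE =>
      le_of_not_gt fun hp => absurd hE (not_lt.2 (hno j i hp))
    set B : Matrix (Fin d) (Fin d) ℝ := Matrix.of fun k l => Complex.normSq (U k l) with hBdef
    have hB : B ∈ doublyStochastic ℝ (Fin d) := by
      rw [mem_doublyStochastic_iff_sum]
      refine ⟨fun k l => Complex.normSq_nonneg _, fun k => ?_, fun l => ?_⟩
      · have h1 : U * star U = 1 := (Matrix.mem_unitaryGroup_iff).1 hU
        have h2 := congrFun (congrFun h1 k) k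
        simp only [Matrix.mul_apply, Matrix.star_apply, Matrix.conjTranspose_apply,
          Matrix.one_apply_eq] at h2
        have h3 : ((∑ l, Complex.normSq (U k l) : ℝ) : ℂ) = 1 := by
          push_cast
          rw [← h2]
          exact Finset.sum_congr rfl fun l _ => by
            rw [← Complex.mul_conj (U k l), Complex.star_def]
        exact_mod_cast h3
      · have h1 : star U * U = 1 := (Matrix.mem_unitaryGroup_iff').1 hU
        have h2 := congrFun (congrFun h1 l) l
        simp only [Matrix.mul_apply, Matrix.star_apply, Matrix.conjTranspose_apply,
          Matrix.one_apply_eq] at h2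
        have h3 : ((∑ k, Complex.normSq (U k l) : ℝ) : ℂ) = 1 := by
          push_cast
          rw [← h2]
          exact Finset.sum_congr rfl fun k _ => by
            rw [Complex.star_def, mul_comm, Complex.mul_conj]
        exact_mod_cast h3
    have hk := key_ineq p E hA B hB
    rw [trace_formula, htr2] at hlt
    exact absurd hlt (not_lt.2 hk)
  · rintro ⟨i, j, hp, hE⟩
    have hij : i ≠ j := fun h => absurd hp (by simp [h])
    refine ⟨(Equiv.swap i j).permMatrix ℂ, perm_unitary _, ?_⟩
    rw [trace_formula, htr2]
    have hBsum : ∑ k, ∑ l, Complex.normSq ((Equiv.swap i j).permMatrix ℂ k l) * (p l * E k)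
        = ∑ k, p (Equiv.swap i j k) * E k := by
      refine Finset.sum_congr rfl fun k _ => ?_
      simp [Equiv.Perm.permMatrix, PEquiv.toMatrix_apply, Equiv.toPEquiv_apply,
        apply_ite Complex.normSq, ite_mul, Finset.sum_ite_eq, Finset.sum_ite_eq']
    rw [hBsum]
    have hdiff : ∑ k, p (Equiv.swap i j k) * E k - ∑ k, p k * E k
        = (p j - p i) * E i + (p i - p j) * E j := by
      rw [← Finset.sum_sub_distrib]
      have hz : ∀ k ∈ (Finset.univ : Finset (Fin d)), k ∉ ({i, j} : Finset (Fin d)) →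
          p (Equiv.swap i j k) * E k - p k * E k = 0 := by
        intro k _ hk
        simp only [Finset.mem_insert, Finset.mem_singleton, not_or] at hk
        rw [Equiv.swap_apply_of_ne_of_ne hk.1 hk.2]; ring
      rw [← Finset.sum_subset (Finset.subset_univ ({i, j})) hz, Finset.sum_pair hij]
      simp [Equiv.swap_apply_left, Equiv.swap_apply_right]
      ring
    nlinarith [mul_pos (sub_pos.2 hp) (sub_pos.2 hE)]
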